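/- Let f₁, f₂, … be non-constant holomorphic self-maps of the open unit disc 𝔻 such that Σₙ ρ(fₙ(a), a) < ∞ and Σₙ ρ(fₙ(b), b) < ∞ for two distinct points a, b ∈ 𝔻. Then the left-composition sequence Fₙ = fₙ ∘ fₙ₋₁ ∘ ⋯ ∘ f₁ converges locally uniformly on 𝔻 to a non-constant holomorphic self-map of 𝔻. -/

import Mathlib

/-!
Write `ε n` for the pseudo-hyperbolic displacement of `f n` at `a` and at `b`. The key estimate
is that a holomorphic self-map of the disc with displacement `ε` at two distinct points moves
every point of a compact subdisc by `O(ε)`. After Möbius normalisations `a = 0` and `f 0 = 0`,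
the Schwarz quotient `f z / z` maps the disc into the closed disc and is `O(ε)`-close to `1` at
the second point; a Harnack-type form of Schwarz–Pick spreads this to the compact subdisc.

The compositions `F n` do not increase hyperbolic distances and the orbit of `a` has finite
hyperbolic length, so the orbits of a compact subdisc stay in a fixed compact subdisc. There
`‖F (n + 1) - F n‖ ≤ C ε n`, hence `F n` converges locally uniformly, and by Cauchy's estimate
`‖f n' - 1‖ ≤ C ε n` along the orbits. Once the tail of `∑ C ε n` is below `1/2`, the chain rule
keeps `‖(F n)' z₀‖` above half its value at a point where it does not vanish, so the limit has a
nonzero derivative and is not constant.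
-/

open Complex Set Filter Metric

/-- The open unit disc in the complex plane. -/
def unitDisc : Set ℂ := {z : ℂ | ‖z‖ < 1}

/-- Inverse hyperbolic tangent. -/
noncomputable def artanh (x : ℝ) : ℝ := (1 / 2) * Real.log ((1 + x) / (1 - x))

/-- The hyperbolic distance on the unit disc, induced by the Riemannian metric
`2|dz|/(1-|z|²)`. -/
noncomputable def hdist (z w : ℂ) : ℝ :=
  2 * artanh ‖(z - w) / (1 - (starRingEnd ℂ) w * z)‖

/-- Left compositions: `leftComp f n = f (n-1) ∘ ⋯ ∘ f 1 ∘ f 0`, so that `f k`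
plays the role of the `(k+1)`-st map `f_{k+1}` of the sequence. -/
def leftComp (f : ℕ → ℂ → ℂ) : ℕ → ℂ → ℂ
  | 0 => id
  | n + 1 => f n ∘ leftComp f n

/-- Right compositions: `rightComp g n = g 0 ∘ g 1 ∘ ⋯ ∘ g (n-1)`, so that `g k`
plays the role of the `(k+1)`-st map `g_{k+1}` of the sequence. -/
def rightComp (g : ℕ → ℂ → ℂ) : ℕ → ℂ → ℂ
  | 0 => id
  | n + 1 => rightComp g n ∘ g n

open ComplexConjugate Topology

noncomputable def pdist (z w : ℂ) : ℝ := ‖(z - w) / (1 - conj w * z)‖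

lemma unitDisc_eq_ball : unitDisc = ball (0 : ℂ) 1 := by
  ext z; simp [unitDisc]

lemma isOpen_unitDisc : IsOpen unitDisc := unitDisc_eq_ball ▸ isOpen_ball

lemma isPreconnected_unitDisc : IsPreconnected unitDisc :=
  unitDisc_eq_ball ▸ (convex_ball _ _).isPreconnected

lemma zero_mem_unitDisc : (0 : ℂ) ∈ unitDisc := by simp [unitDisc]

section PseudoHyperbolic

variable {z w : ℂ}

lemma one_sub_conj_mul_ne_zero (hz : ‖z‖ < 1) (hw : ‖w‖ < 1) : 1 - conj w * z ≠ 0 := by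
  intro h
  have : ‖conj w * z‖ < 1 := by
    rw [norm_mul, Complex.norm_conj]
    nlinarith [norm_nonneg z, norm_nonneg w]
  simp [← eq_of_sub_eq_zero h] at this

lemma sq_norm_one_sub_conj_mul_sub_sq_norm_sub (z w : ℂ) :
    ‖1 - conj w * z‖ ^ 2 - ‖z - w‖ ^ 2 = (1 - ‖z‖ ^ 2) * (1 - ‖w‖ ^ 2) := by
  simp only [Complex.sq_norm, Complex.normSq_apply, Complex.sub_re, Complex.sub_im,
    Complex.mul_re, Complex.mul_im, Complex.one_re, Complex.one_im, Complex.conj_re,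
    Complex.conj_im]
  ring

lemma pdist_eq_div (z w : ℂ) : pdist z w = ‖z - w‖ / ‖1 - conj w * z‖ := norm_div _ _

lemma pdist_nonneg (z w : ℂ) : 0 ≤ pdist z w := norm_nonneg _

lemma pdist_self (z : ℂ) : pdist z z = 0 := by simp [pdist]

lemma pdist_zero_right (z : ℂ) : pdist z 0 = ‖z‖ := by simp [pdist]

lemma pdist_comm (z w : ℂ) : pdist z w = pdist w z := by
  rw [pdist_eq_div, pdist_eq_div, norm_sub_rev z w, ← Complex.norm_conj (1 - conj z * w)]
  simp [mul_comm]

lemma pdist_lt_one (hz : ‖z‖ < 1) (hw : ‖w‖ < 1) : pdist z w < 1 := by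
  rw [pdist_eq_div, div_lt_one (norm_pos_iff.2 (one_sub_conj_mul_ne_zero hz hw))]
  have hid := sq_norm_one_sub_conj_mul_sub_sq_norm_sub z w
  have hpos : 0 < (1 - ‖z‖ ^ 2) * (1 - ‖w‖ ^ 2) := by
    apply mul_pos <;> nlinarith [norm_nonneg z, norm_nonneg w]
  nlinarith [norm_nonneg (z - w), norm_nonneg (1 - conj w * z)]

lemma norm_sub_le_two_mul_pdist (hz : ‖z‖ < 1) (hw : ‖w‖ < 1) : ‖z - w‖ ≤ 2 * pdist z w := by
  have hpos := norm_pos_iff.2 (one_sub_conj_mul_ne_zero hz hw)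
  have hle : ‖1 - conj w * z‖ ≤ 2 := by
    calc ‖1 - conj w * z‖ ≤ ‖(1 : ℂ)‖ + ‖conj w * z‖ := norm_sub_le _ _
      _ ≤ 2 := by
        rw [norm_one, norm_mul, Complex.norm_conj]
        nlinarith [norm_nonneg z, norm_nonneg w]
  rw [pdist_eq_div, mul_div_assoc', le_div_iff₀ hpos]
  nlinarith [norm_nonneg (z - w)]

lemma pdist_le_add_div (hz : ‖z‖ < 1) (hw : ‖w‖ < 1) :
    pdist z w ≤ (‖z‖ + ‖w‖) / (1 + ‖z‖ * ‖w‖) := by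
  set s : ℝ := (conj w * z).re
  have hpos := norm_pos_iff.2 (one_sub_conj_mul_ne_zero hz hw)
  have hsq_num : ‖z - w‖ ^ 2 = ‖z‖ ^ 2 + ‖w‖ ^ 2 - 2 * s := by
    simp only [s, Complex.sq_norm, Complex.normSq_apply, Complex.sub_re, Complex.sub_im,
      Complex.mul_re, Complex.conj_re, Complex.conj_im]
    ring
  have hsq_den : ‖1 - conj w * z‖ ^ 2 = 1 - 2 * s + ‖z‖ ^ 2 * ‖w‖ ^ 2 := by
    simp only [s, Complex.sq_norm, Complex.normSq_apply, Complex.sub_re, Complex.sub_im,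
      Complex.mul_re, Complex.mul_im, Complex.conj_re, Complex.conj_im, Complex.one_re,
      Complex.one_im]
    ring
  have hs : |s| ≤ ‖z‖ * ‖w‖ := by
    simpa [s, mul_comm] using Complex.abs_re_le_norm (conj w * z)
  obtain ⟨hs₁, -⟩ := abs_le.1 hs
  have h0z := norm_nonneg z
  have h0w := norm_nonneg w
  -- the difference of the two sides is `2 (1 - ‖z‖²) (1 - ‖w‖²) (s + ‖z‖ ‖w‖)`
  have hsq : ‖z - w‖ ^ 2 * (1 + ‖z‖ * ‖w‖) ^ 2 ≤ (‖z‖ + ‖w‖) ^ 2 * ‖1 - conj w * z‖ ^ 2 := by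
    rw [hsq_num, hsq_den]
    nlinarith [mul_nonneg (mul_nonneg (by nlinarith : (0 : ℝ) ≤ 1 - ‖z‖ ^ 2)
      (by nlinarith : (0 : ℝ) ≤ 1 - ‖w‖ ^ 2)) (by linarith : (0 : ℝ) ≤ s + ‖z‖ * ‖w‖)]
  rw [pdist_eq_div, div_le_div_iff₀ hpos (by positivity)]
  exact (pow_le_pow_iff_left₀ (by positivity) (by positivity) two_ne_zero).1
    (by rw [mul_pow, mul_pow]; exact hsq)

lemma pdist_le_of_norm_le {z w : ℂ} {r : ℝ} (hz : ‖z‖ ≤ r) (hw : ‖w‖ ≤ r) (hr : r < 1) :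
    pdist z w ≤ 2 * r / (1 + r ^ 2) := by
  have h0z := norm_nonneg z
  have h0w := norm_nonneg w
  refine (pdist_le_add_div (hz.trans_lt hr) (hw.trans_lt hr)).trans ?_
  rw [div_le_div_iff₀ (by positivity) (by positivity)]
  nlinarith [mul_nonneg (sub_nonneg.2 hz) (sub_nonneg.2 hw), mul_nonneg (sub_nonneg.2 hz) h0w,
    mul_nonneg (sub_nonneg.2 hw) h0z]

lemma two_mul_div_one_add_sq_lt_one {r : ℝ} (hr : r < 1) : 2 * r / (1 + r ^ 2) < 1 := by
  rw [div_lt_one (by positivity)]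
  nlinarith [sq_pos_of_pos (sub_pos.2 hr)]

end PseudoHyperbolic

noncomputable def mobius (c z : ℂ) : ℂ := (z + c) / (1 + conj c * z)

section Mobius

variable {c z w : ℂ}

lemma one_add_conj_mul_ne_zero (hc : ‖c‖ < 1) (hz : ‖z‖ < 1) : 1 + conj c * z ≠ 0 := by
  simpa using one_sub_conj_mul_ne_zero hz (w := -c) (by rwa [norm_neg])

lemma one_add_mul_conj_ne_zero (hc : ‖c‖ < 1) (hw : ‖w‖ < 1) : 1 + c * conj w ≠ 0 := by
  simpa [mul_comm] using (map_ne_zero (starRingEnd ℂ)).2 (one_add_conj_mul_ne_zero hc hw)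

lemma norm_mobius (c z : ℂ) : ‖mobius c z‖ = pdist z (-c) := by
  simp [mobius, pdist]

lemma pdist_eq_norm_mobius_neg (z w : ℂ) : pdist z w = ‖mobius (-w) z‖ := by
  rw [norm_mobius, neg_neg]

lemma norm_mobius_lt_one (hc : ‖c‖ < 1) (hz : ‖z‖ < 1) : ‖mobius c z‖ < 1 := by
  rw [norm_mobius]
  exact pdist_lt_one hz (by rwa [norm_neg])

lemma mapsTo_mobius (hc : ‖c‖ < 1) : MapsTo (mobius c) unitDisc unitDisc :=
  fun _ hz => norm_mobius_lt_one hc hz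

lemma differentiableOn_mobius (hc : ‖c‖ < 1) : DifferentiableOn ℂ (mobius c) unitDisc :=
  (differentiableOn_id.add_const c).div ((differentiableOn_const 1).add
    (differentiableOn_id.const_mul _)) fun _ hz => one_add_conj_mul_ne_zero hc hz

lemma mobius_zero (c : ℂ) : mobius c 0 = c := by simp [mobius]

lemma mobius_neg_self (c : ℂ) : mobius (-c) c = 0 := by simp [mobius]

lemma mobius_sub_mobius (hc : ‖c‖ < 1) (hz : ‖z‖ < 1) (hw : ‖w‖ < 1) :
    mobius c z - mobius c w
      = (1 - conj c * c) * (z - w) / ((1 + conj c * z) * (1 + conj c * w)) := by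
  rw [mobius, mobius, div_sub_div _ _ (one_add_conj_mul_ne_zero hc hz)
    (one_add_conj_mul_ne_zero hc hw)]
  ring

lemma one_sub_conj_mobius_mul_mobius (hc : ‖c‖ < 1) (hz : ‖z‖ < 1) (hw : ‖w‖ < 1) :
    1 - conj (mobius c w) * mobius c z
      = (1 - conj c * c) * (1 - conj w * z) / ((1 + c * conj w) * (1 + conj c * z)) := by
  simp only [mobius, map_div₀, map_add, map_mul, Complex.conj_conj, map_one]
  rw [div_mul_div_comm, one_sub_div (mul_ne_zero (one_add_mul_conj_ne_zero hc hw)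
    (one_add_conj_mul_ne_zero hc hz))]
  ring

lemma mobius_neg_mobius (hc : ‖c‖ < 1) (hz : ‖z‖ < 1) : mobius (-c) (mobius c z) = z := by
  have hcz := one_add_conj_mul_ne_zero hc hz
  have hcc : 1 - conj c * c ≠ 0 := by simpa using one_sub_conj_mul_ne_zero hc hc
  have hnum : mobius c z + -c = z * (1 - conj c * c) / (1 + conj c * z) := by
    rw [mobius, div_add' _ _ _ hcz]; ring
  have hden : 1 + conj (-c) * mobius c z = (1 - conj c * c) / (1 + conj c * z) := by
    rw [mobius, map_neg, neg_mul, ← sub_eq_add_neg, mul_div_assoc', one_sub_div hcz]; ring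
  rw [mobius, hnum, hden, div_div_div_cancel_right₀ hcz, mul_div_assoc, div_self hcc, mul_one]

lemma mobius_mobius_neg (hc : ‖c‖ < 1) (hz : ‖z‖ < 1) : mobius c (mobius (-c) z) = z := by
  simpa using mobius_neg_mobius (c := -c) (by rwa [norm_neg]) hz

lemma pdist_mobius (hc : ‖c‖ < 1) (hz : ‖z‖ < 1) (hw : ‖w‖ < 1) :
    pdist (mobius c z) (mobius c w) = pdist z w := by
  have hcz := one_add_conj_mul_ne_zero hc hz
  have hcw := one_add_conj_mul_ne_zero hc hw
  have hcc : 1 - conj c * c ≠ 0 := by simpa using one_sub_conj_mul_ne_zero hc hc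
  have hunit : ‖(1 + c * conj w) / (1 + conj c * w)‖ = 1 := by
    rw [norm_div, div_eq_one_iff_eq (norm_ne_zero_iff.2 hcw), ← Complex.norm_conj]
    simp [mul_comm]
  rw [pdist, pdist, mobius_sub_mobius hc hz hw, one_sub_conj_mobius_mul_mobius hc hz hw,
    ← mul_one ‖(z - w) / _‖, ← hunit, ← norm_mul]
  congr 1
  field_simp

lemma one_sub_norm_le_norm_one_add_conj_mul {c u : ℂ} (hu : ‖u‖ ≤ 1) :
    1 - ‖c‖ ≤ ‖1 + conj c * u‖ := by
  have h := norm_sub_norm_le (1 : ℂ) (-(conj c * u))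
  rw [norm_one, norm_neg, norm_mul, Complex.norm_conj, sub_neg_eq_add] at h
  nlinarith [norm_nonneg c]

lemma norm_mobius_sub_le {c u : ℂ} (hc : ‖c‖ ≤ 1 / 2) (hu : ‖u‖ ≤ 1) :
    ‖mobius c u - u‖ ≤ 4 * ‖c‖ := by
  have hden : 1 / 2 ≤ ‖1 + conj c * u‖ := by
    linarith [one_sub_norm_le_norm_one_add_conj_mul (c := c) hu]
  have hnum : ‖c - conj c * u ^ 2‖ ≤ 2 * ‖c‖ := by
    refine (norm_sub_le _ _).trans ?_
    rw [norm_mul, Complex.norm_conj, norm_pow]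
    nlinarith [mul_le_mul_of_nonneg_left (pow_le_one₀ (n := 2) (norm_nonneg u) hu) (norm_nonneg c)]
  have hne : 1 + conj c * u ≠ 0 := norm_pos_iff.1 (by linarith)
  have hdiff : mobius c u - u = (c - conj c * u ^ 2) / (1 + conj c * u) := by
    rw [mobius, div_sub' hne]; ring
  rw [hdiff, norm_div, div_le_iff₀ (by linarith)]
  nlinarith [norm_nonneg c]

lemma norm_mobius_sub_mobius_le {c u v : ℂ} (hc : ‖c‖ < 1) (hu : ‖u‖ < 1) (hv : ‖v‖ < 1) :
    ‖mobius c u - mobius c v‖ ≤ ‖u - v‖ / (1 - ‖c‖) ^ 2 := by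
  have hu' := one_sub_norm_le_norm_one_add_conj_mul (c := c) hu.le
  have hv' := one_sub_norm_le_norm_one_add_conj_mul (c := c) hv.le
  have hcc : ‖1 - conj c * c‖ ≤ 1 := by
    rw [Complex.conj_mul', ← Complex.ofReal_pow, ← Complex.ofReal_one, ← Complex.ofReal_sub,
      Complex.norm_real, Real.norm_eq_abs, abs_le]
    constructor <;> nlinarith [norm_nonneg c]
  have hpos : 0 < 1 - ‖c‖ := by linarith
  rw [mobius_sub_mobius hc hu hv, norm_div, norm_mul, norm_mul, div_le_div_iff₀ (by
    nlinarith) (by positivity)]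
  have hprod : (1 - ‖c‖) ^ 2 ≤ ‖1 + conj c * u‖ * ‖1 + conj c * v‖ := by
    rw [sq]; exact mul_le_mul hu' hv' hpos.le (by positivity)
  calc ‖1 - conj c * c‖ * ‖u - v‖ * (1 - ‖c‖) ^ 2
      ≤ 1 * ‖u - v‖ * (‖1 + conj c * u‖ * ‖1 + conj c * v‖) :=
        mul_le_mul (mul_le_mul_of_nonneg_right hcc (norm_nonneg _)) hprod (by positivity)
          (by positivity)
    _ = ‖u - v‖ * (‖1 + conj c * u‖ * ‖1 + conj c * v‖) := by rw [one_mul]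

end Mobius

section SchwarzPick

variable {f : ℂ → ℂ} {z w : ℂ}

theorem pdist_le_pdist_of_mapsTo (hf : DifferentiableOn ℂ f unitDisc)
    (hm : MapsTo f unitDisc unitDisc) (hz : z ∈ unitDisc) (hw : w ∈ unitDisc) :
    pdist (f z) (f w) ≤ pdist z w := by
  have hfw : ‖f w‖ < 1 := hm hw
  have hnw : ‖-w‖ < 1 := by rwa [norm_neg]
  set q : ℂ → ℂ := mobius (-f w) ∘ f ∘ mobius w
  have hq : DifferentiableOn ℂ q (ball 0 1) := by
    rw [← unitDisc_eq_ball]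
    exact (differentiableOn_mobius (by rwa [norm_neg])).comp
      (hf.comp (differentiableOn_mobius hw) (mapsTo_mobius hw))
      (hm.comp (mapsTo_mobius hw))
  have hqm : MapsTo q (ball 0 1) (closedBall 0 1) := by
    rw [← unitDisc_eq_ball]
    exact fun ζ hζ => mem_closedBall_zero_iff.2
      (norm_mobius_lt_one (by rwa [norm_neg]) (hm (mapsTo_mobius hw hζ))).le
  have hq0 : q 0 = 0 := by simp [q, mobius_zero, mobius_neg_self]
  have hqz : q (mobius (-w) z) = mobius (-f w) (f z) := by
    simp only [q, Function.comp_apply, mobius_mobius_neg hw hz]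
  have := Complex.norm_le_norm_of_mapsTo_ball hq hqm hq0
    (by simpa using norm_mobius_lt_one hnw hz)
  rwa [hqz, ← pdist_eq_norm_mobius_neg, ← pdist_eq_norm_mobius_neg] at this

lemma pdist_le_add_div_one_add_mul {x y z : ℂ} (hx : ‖x‖ < 1) (hy : ‖y‖ < 1) (hz : ‖z‖ < 1) :
    pdist x z ≤ (pdist x y + pdist y z) / (1 + pdist x y * pdist y z) := by
  have hny : ‖-y‖ < 1 := by rwa [norm_neg]
  rw [← pdist_mobius hny hx hz, pdist_comm y z, pdist_eq_norm_mobius_neg x,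
    pdist_eq_norm_mobius_neg z]
  exact pdist_le_add_div (norm_mobius_lt_one hny hx) (norm_mobius_lt_one hny hz)

end SchwarzPick

section HyperbolicDistance

lemma artanh_eq_real_artanh {x : ℝ} (hx : x ∈ Icc (-1) 1) : artanh x = Real.artanh x :=
  (Real.artanh_eq_half_log hx).symm

lemma artanh_le_artanh {x y : ℝ} (hx : 0 ≤ x) (hxy : x ≤ y) (hy : y < 1) :
    artanh x ≤ artanh y := by
  rw [artanh_eq_real_artanh ⟨by linarith, by linarith⟩, artanh_eq_real_artanh ⟨by linarith, hy.le⟩]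
  exact Real.artanh_le_artanh (by linarith) hy hxy

lemma le_two_mul_artanh {x : ℝ} (h₀ : 0 ≤ x) (h₁ : x < 1) : x ≤ 2 * artanh x := by
  have hpos : 0 < (1 + x) / (1 - x) := div_pos (by linarith) (by linarith)
  have hexp : Real.exp x ≤ (1 + x) / (1 - x) := by
    rw [le_div_iff₀ (by linarith)]
    calc Real.exp x * (1 - x) ≤ Real.exp x * Real.exp (-x) := by
          gcongr; linarith [Real.add_one_le_exp (-x)]
      _ ≤ 1 + x := by rw [← Real.exp_add, add_neg_cancel, Real.exp_zero]; linarith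
  have := (Real.le_log_iff_exp_le hpos).2 hexp
  rw [artanh]
  linarith

lemma artanh_add {u v : ℝ} (hu₀ : 0 ≤ u) (hu₁ : u < 1) (hv₀ : 0 ≤ v) (hv₁ : v < 1) :
    artanh u + artanh v = artanh ((u + v) / (1 + u * v)) := by
  have huv : 0 < 1 + u * v := by nlinarith
  have hsum : 1 + (u + v) / (1 + u * v) = (1 + u) * (1 + v) / (1 + u * v) := by
    field_simp; ring
  have hdiff : 1 - (u + v) / (1 + u * v) = (1 - u) * (1 - v) / (1 + u * v) := by
    field_simp; ring
  have hquot : (1 + u) * (1 + v) / (1 + u * v) / ((1 - u) * (1 - v) / (1 + u * v))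
      = (1 + u) / (1 - u) * ((1 + v) / (1 - v)) := by
    field_simp
  rw [artanh, artanh, artanh, hsum, hdiff, hquot,
    Real.log_mul (div_pos (by linarith) (by linarith)).ne'
      (div_pos (by linarith) (by linarith)).ne']
  ring

variable {x y z w : ℂ}

lemma hdist_eq (z w : ℂ) : hdist z w = 2 * artanh (pdist z w) := rfl

lemma hdist_zero_right (z : ℂ) : hdist z 0 = 2 * artanh ‖z‖ := by
  rw [hdist_eq, pdist_zero_right]

lemma hdist_zero_right_le {r : ℝ} (hz : ‖z‖ ≤ r) (hr : r < 1) : hdist z 0 ≤ 2 * artanh r := by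
  rw [hdist_zero_right]
  linarith [artanh_le_artanh (norm_nonneg z) hz hr]

lemma hdist_self (z : ℂ) : hdist z z = 0 := by
  simp [hdist_eq, pdist_self, artanh]

lemma hdist_comm (z w : ℂ) : hdist z w = hdist w z := by
  rw [hdist_eq, hdist_eq, pdist_comm]

lemma hdist_nonneg (hz : ‖z‖ < 1) (hw : ‖w‖ < 1) : 0 ≤ hdist z w := by
  have h := pdist_nonneg z w
  rw [hdist_eq, artanh_eq_real_artanh ⟨by linarith, (pdist_lt_one hz hw).le⟩]
  linarith [Real.artanh_nonneg h]

lemma pdist_le_hdist (hz : ‖z‖ < 1) (hw : ‖w‖ < 1) : pdist z w ≤ hdist z w :=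
  le_two_mul_artanh (pdist_nonneg z w) (pdist_lt_one hz hw)

lemma hdist_le_of_pdist_le {z w z' w' : ℂ} (hz : ‖z‖ < 1) (hw : ‖w‖ < 1)
    (h : pdist z' w' ≤ pdist z w) : hdist z' w' ≤ hdist z w := by
  rw [hdist_eq, hdist_eq]
  linarith [artanh_le_artanh (pdist_nonneg z' w') h (pdist_lt_one hz hw)]

lemma hdist_triangle (hx : ‖x‖ < 1) (hy : ‖y‖ < 1) (hz : ‖z‖ < 1) :
    hdist x z ≤ hdist x y + hdist y z := by
  have hxy := pdist_lt_one hx hy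
  have hyz := pdist_lt_one hy hz
  have hxy₀ := pdist_nonneg x y
  have hyz₀ := pdist_nonneg y z
  have hlt : (pdist x y + pdist y z) / (1 + pdist x y * pdist y z) < 1 := by
    rw [div_lt_one (by positivity)]
    nlinarith
  have hmono := artanh_le_artanh (pdist_nonneg x z) (pdist_le_add_div_one_add_mul hx hy hz) hlt
  rw [hdist_eq, hdist_eq, hdist_eq, ← mul_add, artanh_add hxy₀ hxy hyz₀ hyz]
  linarith

lemma hdist_le_hdist_of_mapsTo {f : ℂ → ℂ} (hf : DifferentiableOn ℂ f unitDisc)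
    (hm : MapsTo f unitDisc unitDisc) (hz : z ∈ unitDisc) (hw : w ∈ unitDisc) :
    hdist (f z) (f w) ≤ hdist z w :=
  hdist_le_of_pdist_le hz hw (pdist_le_pdist_of_mapsTo hf hm hz hw)

lemma norm_le_tanh_of_hdist_zero_le (hz : ‖z‖ < 1) {B : ℝ} (h : hdist z 0 ≤ B) :
    ‖z‖ ≤ Real.tanh (B / 2) := by
  have hz' : ‖z‖ ∈ Ioo (-1) 1 := ⟨by linarith [norm_nonneg z], hz⟩
  have htanh : Real.tanh (B / 2) ∈ Ioo (-1) 1 := by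
    refine ⟨?_, Real.tanh_lt_one _⟩
    linarith [Real.tanh_neg (B / 2), Real.tanh_lt_one (-(B / 2))]
  rw [hdist_zero_right, artanh_eq_real_artanh (Ioo_subset_Icc_self hz')] at h
  rw [← Real.artanh_le_artanh_iff hz' htanh, Real.artanh_tanh]
  linarith

end HyperbolicDistance

section Displacement

variable {z w : ℂ}

lemma norm_sub_le_pdist_mul_of_mapsTo_closedBall {h : ℂ → ℂ} (hd : DifferentiableOn ℂ h unitDisc)
    (hm : MapsTo h unitDisc (closedBall 0 1)) (hz : z ∈ unitDisc) (hw : w ∈ unitDisc) :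
    ‖h z - h w‖ ≤ pdist z w * ‖1 - conj (h w) * h z‖ := by
  by_cases hmax : ∃ x ∈ unitDisc, 1 ≤ ‖h x‖
  · obtain ⟨x, hx, hx₁⟩ := hmax
    have hconst := Complex.eqOn_of_isPreconnected_of_isMaxOn_norm isPreconnected_unitDisc
      isOpen_unitDisc hd hx fun y hy => (mem_closedBall_zero_iff.1 (hm hy)).trans hx₁
    simp only [hconst hz, hconst hw, Function.const_apply, sub_self, norm_zero]
    exact mul_nonneg (pdist_nonneg _ _) (norm_nonneg _)
  · push Not at hmax
    have hm' : MapsTo h unitDisc unitDisc := hmax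
    have := pdist_le_pdist_of_mapsTo hd hm' hz hw
    rwa [pdist_eq_div, div_le_iff₀ (norm_pos_iff.2
      (one_sub_conj_mul_ne_zero (hm' hz) (hm' hw)))] at this

/-- A Harnack-type inequality. Schwarz–Pick gives it because `1 - ‖h w‖ ^ 2 ≤ 2 * ‖h w - 1‖`. -/
lemma norm_sub_one_le_of_mapsTo_closedBall {h : ℂ → ℂ} (hd : DifferentiableOn ℂ h unitDisc)
    (hm : MapsTo h unitDisc (closedBall 0 1)) (hz : z ∈ unitDisc) (hw : w ∈ unitDisc) {ρ : ℝ}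
    (hρ : pdist z w ≤ ρ) (hρ₁ : ρ < 1) :
    ‖h z - 1‖ ≤ (1 + ρ) / (1 - ρ) * ‖h w - 1‖ := by
  have hw₁ : ‖h w‖ ≤ 1 := mem_closedBall_zero_iff.1 (hm hw)
  have hρ₀ : 0 ≤ ρ := (pdist_nonneg z w).trans hρ
  set D := ‖h z - h w‖
  have hsplit : ‖1 - conj (h w) * h z‖ ≤ 2 * ‖h w - 1‖ + D := by
    have hdecomp :
        1 - conj (h w) * h z = ((1 - ‖h w‖ ^ 2 : ℝ) : ℂ) + conj (h w) * (h w - h z) := by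
      push_cast
      rw [← Complex.conj_mul']
      ring
    have hnear : 1 - ‖h w‖ ≤ ‖h w - 1‖ := by
      simpa [norm_sub_rev] using norm_sub_norm_le (1 : ℂ) (h w)
    rw [hdecomp]
    refine (norm_add_le _ _).trans ?_
    rw [Complex.norm_real, Real.norm_eq_abs, abs_of_nonneg (by nlinarith [norm_nonneg (h w)]),
      norm_mul, Complex.norm_conj, norm_sub_rev]
    nlinarith [norm_nonneg (h w), norm_nonneg (h z - h w)]
  have hD : D ≤ ρ * (2 * ‖h w - 1‖ + D) :=
    (norm_sub_le_pdist_mul_of_mapsTo_closedBall hd hm hz hw).trans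
      (mul_le_mul hρ hsplit (norm_nonneg _) hρ₀)
  calc ‖h z - 1‖ ≤ D + ‖h w - 1‖ := norm_sub_le_norm_sub_add_norm_sub _ _ _
    _ ≤ (1 + ρ) / (1 - ρ) * ‖h w - 1‖ := by
      rw [div_mul_eq_mul_div, le_div_iff₀ (by linarith)]
      nlinarith

lemma norm_map_sub_self_le_of_map_zero {g : ℂ → ℂ} (hd : DifferentiableOn ℂ g unitDisc)
    (hm : MapsTo g unitDisc unitDisc) (hg₀ : g 0 = 0) {b : ℂ} (hb : b ∈ unitDisc) (hb₀ : b ≠ 0)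
    (hz : z ∈ unitDisc) {ρ : ℝ} (hρ : pdist z b ≤ ρ) (hρ₁ : ρ < 1) :
    ‖g z - z‖ ≤ (1 + ρ) / (1 - ρ) / ‖b‖ * ‖g b - b‖ := by
  set h := dslope g 0
  have hgh : ∀ x, g x - x = x * (h x - 1) := fun x => by
    have := sub_smul_dslope g 0 x
    rw [hg₀, sub_zero, sub_zero, smul_eq_mul] at this
    rw [← this]
    ring
  rw [unitDisc_eq_ball] at hd hm hb hz
  have hhd : DifferentiableOn ℂ h (ball 0 1) :=
    (differentiableOn_dslope (isOpen_ball.mem_nhds (mem_ball_self one_pos))).2 hd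
  have hhm : MapsTo h (ball 0 1) (closedBall 0 1) := fun x hx => by
    have := Complex.norm_dslope_le_div_of_mapsTo_ball hd
      (by rw [hg₀]; exact hm.mono_right ball_subset_closedBall) hx
    simpa using this
  rw [← unitDisc_eq_ball] at hhd hhm hb hz
  have hharnack := norm_sub_one_le_of_mapsTo_closedBall hhd hhm hz hb hρ hρ₁
  have hbpos : 0 < ‖b‖ := norm_pos_iff.2 hb₀
  rw [hgh z, hgh b, norm_mul, norm_mul, div_mul_eq_mul_div, mul_div_assoc,
    mul_div_cancel_left₀ _ hbpos.ne']
  calc ‖z‖ * ‖h z - 1‖ ≤ 1 * ‖h z - 1‖ := by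
        gcongr; exact (show ‖z‖ < 1 from hz).le
    _ ≤ _ := by rw [one_mul]; exact hharnack

lemma norm_map_sub_self_le_of_norm_map_zero_le {f : ℂ → ℂ} (hd : DifferentiableOn ℂ f unitDisc)
    (hm : MapsTo f unitDisc unitDisc) (hf₀ : ‖f 0‖ ≤ 1 / 2) {b z : ℂ} (hb : b ∈ unitDisc)
    (hb₀ : b ≠ 0) (hz : z ∈ unitDisc) {ρ : ℝ} (hρ : pdist z b ≤ ρ) (hρ₁ : ρ < 1) :
    ‖f z - z‖ ≤ 4 * ‖f 0‖ + (1 + ρ) / (1 - ρ) / ‖b‖ * (4 * ‖f 0‖ + ‖f b - b‖) := by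
  have hc : ‖-f 0‖ < 1 := by rw [norm_neg]; linarith
  set g := mobius (-f 0) ∘ f
  have hgd : DifferentiableOn ℂ g unitDisc := (differentiableOn_mobius hc).comp hd hm
  have hgm : MapsTo g unitDisc unitDisc := (mapsTo_mobius hc).comp hm
  have hg₀ : g 0 = 0 := mobius_neg_self (f 0)
  have hfg : ∀ u ∈ unitDisc, ‖f u - g u‖ ≤ 4 * ‖f 0‖ := fun u hu => by
    rw [norm_sub_rev, ← norm_neg (f 0)]
    exact norm_mobius_sub_le (by rwa [norm_neg]) (hm hu).le
  have hK : 0 ≤ (1 + ρ) / (1 - ρ) / ‖b‖ := by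
    have := (pdist_nonneg z b).trans hρ
    have : 0 < 1 - ρ := by linarith
    positivity
  calc ‖f z - z‖ ≤ ‖f z - g z‖ + ‖g z - z‖ := norm_sub_le_norm_sub_add_norm_sub _ _ _
    _ ≤ 4 * ‖f 0‖ + (1 + ρ) / (1 - ρ) / ‖b‖ * ‖g b - b‖ :=
      add_le_add (hfg z hz) (norm_map_sub_self_le_of_map_zero hgd hgm hg₀ hb hb₀ hz hρ hρ₁)
    _ ≤ 4 * ‖f 0‖ + (1 + ρ) / (1 - ρ) / ‖b‖ * (4 * ‖f 0‖ + ‖f b - b‖) := by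
      gcongr
      calc ‖g b - b‖ ≤ ‖g b - f b‖ + ‖f b - b‖ := norm_sub_le_norm_sub_add_norm_sub _ _ _
        _ ≤ 4 * ‖f 0‖ + ‖f b - b‖ := by rw [norm_sub_rev]; gcongr; exact hfg b hb

lemma mobius_neg_ne_zero {a b : ℂ} (ha : ‖a‖ < 1) (hb : ‖b‖ < 1) (hab : a ≠ b) :
    mobius (-a) b ≠ 0 := fun h => hab <| calc
  a = mobius a 0 := (mobius_zero a).symm
  _ = mobius a (mobius (-a) b) := by rw [h]
  _ = b := mobius_mobius_neg ha hb

lemma norm_map_sub_self_le_of_pdist_le_half {f : ℂ → ℂ} (hd : DifferentiableOn ℂ f unitDisc)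
    (hm : MapsTo f unitDisc unitDisc) {a b w : ℂ} (ha : a ∈ unitDisc) (hb : b ∈ unitDisc)
    (hab : a ≠ b) (hw : w ∈ unitDisc) (hp : pdist (f a) a ≤ 1 / 2) {ρ : ℝ}
    (hρ : pdist w b ≤ ρ) (hρ₁ : ρ < 1) :
    ‖f w - w‖ ≤ (4 + 4 * ((1 + ρ) / (1 - ρ) / ‖mobius (-a) b‖)) / (1 - ‖a‖) ^ 2
      * (pdist (f a) a + pdist (f b) b) := by
  have ha' : ‖-a‖ < 1 := by rwa [norm_neg]
  set b' := mobius (-a) b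
  have hb' : b' ∈ unitDisc := mapsTo_mobius ha' hb
  set K := (1 + ρ) / (1 - ρ) / ‖b'‖
  have hK : 0 ≤ K := by
    have : 0 ≤ ρ := (pdist_nonneg w b).trans hρ
    have : 0 < 1 - ρ := by linarith
    positivity
  set F := mobius (-a) ∘ f ∘ mobius a
  have hFd : DifferentiableOn ℂ F unitDisc :=
    (differentiableOn_mobius ha').comp (hd.comp (differentiableOn_mobius ha) (mapsTo_mobius ha))
      (hm.comp (mapsTo_mobius ha))
  have hFm : MapsTo F unitDisc unitDisc := (mapsTo_mobius ha').comp (hm.comp (mapsTo_mobius ha))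
  set z := mobius (-a) w
  have hz : z ∈ unitDisc := mapsTo_mobius ha' hw
  have hF₀ : ‖F 0‖ = pdist (f a) a := by
    simp only [F, Function.comp_apply, mobius_zero, pdist_eq_norm_mobius_neg]
  have hFb : ‖F b' - b'‖ ≤ 2 * pdist (f b) b := by
    have hFb' : F b' = mobius (-a) (f b) := by
      simp only [F, b', Function.comp_apply, mobius_mobius_neg ha hb]
    rw [hFb', ← pdist_mobius ha' (hm hb) hb]
    exact norm_sub_le_two_mul_pdist (mapsTo_mobius ha' (hm hb)) hb'
  have hFz : ‖F z - z‖ ≤ (4 + 4 * K) * (pdist (f a) a + pdist (f b) b) := by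
    have := norm_map_sub_self_le_of_norm_map_zero_le hFd hFm (hF₀ ▸ hp) hb'
      (mobius_neg_ne_zero ha hb hab) hz (by rwa [pdist_mobius ha' hw hb]) hρ₁
    rw [hF₀] at this
    nlinarith [mul_le_mul_of_nonneg_left hFb hK, pdist_nonneg (f a) a, pdist_nonneg (f b) b]
  have hfw : f w - w = mobius a (F z) - mobius a z := by
    simp only [F, z, Function.comp_apply, mobius_mobius_neg ha hw,
      mobius_mobius_neg ha (hm hw)]
  rw [hfw, div_mul_eq_mul_div]
  exact (norm_mobius_sub_mobius_le ha (hFm hz) hz).trans (by gcongr)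

theorem exists_norm_map_sub_self_le {a b : ℂ} (ha : a ∈ unitDisc) (hb : b ∈ unitDisc)
    (hab : a ≠ b) {R : ℝ} (hR : R < 1) :
    ∃ C, 0 ≤ C ∧ ∀ f : ℂ → ℂ, DifferentiableOn ℂ f unitDisc → MapsTo f unitDisc unitDisc →
      ∀ w, ‖w‖ ≤ R → ‖f w - w‖ ≤ C * (pdist (f a) a + pdist (f b) b) := by
  set r := max R ‖b‖
  have hr : r < 1 := max_lt hR hb
  set ρ := 2 * r / (1 + r ^ 2)
  refine ⟨max 4 ((4 + 4 * ((1 + ρ) / (1 - ρ) / ‖mobius (-a) b‖)) / (1 - ‖a‖) ^ 2),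
    le_max_of_le_left (by norm_num), fun f hd hm w hw => ?_⟩
  have hw₁ : w ∈ unitDisc := hw.trans_lt hR
  have hE₀ := add_nonneg (pdist_nonneg (f a) a) (pdist_nonneg (f b) b)
  by_cases hp : pdist (f a) a ≤ 1 / 2
  · have hρ : pdist w b ≤ ρ :=
      pdist_le_of_norm_le (hw.trans (le_max_left _ _)) (le_max_right _ _) hr
    refine (norm_map_sub_self_le_of_pdist_le_half hd hm ha hb hab hw₁ hp hρ
      (two_mul_div_one_add_sq_lt_one hr)).trans ?_
    exact mul_le_mul_of_nonneg_right (le_max_right _ _) hE₀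
  · calc ‖f w - w‖ ≤ ‖f w‖ + ‖w‖ := norm_sub_le _ _
      _ ≤ 4 * (pdist (f a) a + pdist (f b) b) := by
          have : ‖f w‖ < 1 := hm hw₁
          have : ‖w‖ < 1 := hw₁
          linarith [pdist_nonneg (f b) b]
      _ ≤ _ := mul_le_mul_of_nonneg_right (le_max_left _ _) hE₀

theorem exists_norm_deriv_sub_one_le {a b : ℂ} (ha : a ∈ unitDisc) (hb : b ∈ unitDisc)
    (hab : a ≠ b) {R : ℝ} (hR : R < 1) :
    ∃ C, 0 ≤ C ∧ ∀ f : ℂ → ℂ, DifferentiableOn ℂ f unitDisc → MapsTo f unitDisc unitDisc →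
      ∀ w, ‖w‖ ≤ R → ‖deriv f w - 1‖ ≤ C * (pdist (f a) a + pdist (f b) b) := by
  obtain ⟨C, hC, hdisp⟩ := exists_norm_map_sub_self_le ha hb hab (R := (1 + R) / 2) (by linarith)
  set s := (1 - R) / 2 with hs_def
  have hs : 0 < s := by simp only [s]; linarith
  refine ⟨C / s, by positivity, fun f hd hm w hw => ?_⟩
  have hsub : closedBall w s ⊆ closedBall 0 ((1 + R) / 2) := fun u hu => by
    rw [mem_closedBall, dist_eq_norm] at hu
    rw [mem_closedBall_zero_iff]
    linarith [norm_sub_norm_le u w]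
  have hsubD : closedBall 0 ((1 + R) / 2) ⊆ unitDisc := fun u hu => by
    rw [mem_closedBall_zero_iff] at hu
    show ‖u‖ < 1
    linarith
  have hwD : w ∈ unitDisc := hsubD (hsub (mem_closedBall_self hs.le))
  have hderiv : deriv (f - id) w = deriv f w - 1 := by
    rw [deriv_sub ((hd w hwD).differentiableAt (isOpen_unitDisc.mem_nhds hwD))
      differentiableAt_id, deriv_id]
  have hcauchy := Complex.norm_deriv_le_of_forall_mem_sphere_norm_le hs
    ((hd.sub differentiableOn_id).diffContOnCl_ball (hsub.trans hsubD))
    fun u hu => hdisp f hd hm u (mem_closedBall_zero_iff.1 (hsub (sphere_subset_closedBall hu)))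
  rw [hderiv] at hcauchy
  rwa [div_mul_eq_mul_div]

end Displacement

section Limits

theorem tendstoLocallyUniformlyOn_ball_of_norm_sub_le {E G : Type*} [NormedAddCommGroup E]
    [NormedAddCommGroup G] [CompleteSpace G] {F : ℕ → E → G} {u : ℕ → ℝ} (hu : Summable u)
    (h : ∀ r < 1, ∃ C, ∀ n z, ‖z‖ ≤ r → ‖F (n + 1) z - F n z‖ ≤ C * u n) :
    TendstoLocallyUniformlyOn F (fun z => F 0 z + ∑' n, (F (n + 1) z - F n z)) atTop
      (ball 0 1) := by
  refine tendstoLocallyUniformlyOn_of_forall_exists_nhds fun x hx => ?_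
  have hx' : ‖x‖ < 1 := mem_ball_zero_iff.1 hx
  obtain ⟨C, hC⟩ := h ((1 + ‖x‖) / 2) (by linarith)
  refine ⟨closedBall 0 ((1 + ‖x‖) / 2), mem_nhdsWithin_of_mem_nhds
    (closedBall_mem_nhds_of_mem (mem_ball_zero_iff.2 (by linarith))), ?_⟩
  have hsum := tendstoUniformlyOn_tsum_nat (hu.mul_left C)
    fun n z hz => hC n z (mem_closedBall_zero_iff.1 hz)
  have hlim : TendstoUniformlyOn (fun n z => F 0 z + ∑ k ∈ Finset.range n, (F (k + 1) z - F k z))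
      (fun z => F 0 z + ∑' n, (F (n + 1) z - F n z)) atTop (closedBall 0 ((1 + ‖x‖) / 2)) := by
    rw [Metric.tendstoUniformlyOn_iff] at hsum ⊢
    simpa only [dist_add_left] using hsum
  refine hlim.congr (Eventually.of_forall fun n z _ => ?_)
  simp only [Finset.sum_range_sub (fun k => F k z), add_sub_cancel]

lemma exists_ne_comp_of_isPreconnected {U V : Set ℂ} (hU : IsOpen U) (hUc : IsPreconnected U)
    (hVc : IsPreconnected V) {f g : ℂ → ℂ} (hf : AnalyticOnNhd ℂ f V) (hg : AnalyticOnNhd ℂ g U)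
    (hgm : MapsTo g U V) (hfn : ∃ z ∈ V, ∃ w ∈ V, f z ≠ f w)
    (hgn : ∃ z ∈ U, ∃ w ∈ U, g z ≠ g w) : ∃ z ∈ U, ∃ w ∈ U, f (g z) ≠ f (g w) := by
  obtain ⟨z₀, hz₀, w₀, hw₀, hne⟩ := hgn
  have hopen : IsOpen (g '' U) := by
    refine (hg.is_constant_or_isOpen hUc).resolve_left ?_ U subset_rfl hU
    rintro ⟨c, hc⟩
    exact hne (by rw [hc z₀ hz₀, hc w₀ hw₀])
  by_contra! hconst
  have hev : f =ᶠ[𝓝 (g z₀)] fun _ => f (g z₀) := by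
    filter_upwards [hopen.mem_nhds (mem_image_of_mem g hz₀)]
    rintro _ ⟨z, hz, rfl⟩
    exact hconst z hz z₀ hz₀
  have hfc := hf.eqOn_of_preconnected_of_eventuallyEq analyticOnNhd_const hVc (hgm hz₀) hev
  obtain ⟨z, hz, w, hw, hfzw⟩ := hfn
  exact hfzw (by rw [hfc hz, hfc hw])

lemma exists_deriv_ne_zero_of_exists_ne {U S : Set ℂ} (hU : IsOpen U) (hUc : IsPreconnected U)
    {f : ℂ → ℂ} (hf : DifferentiableOn ℂ f U) (hS : IsOpen S) (hSc : IsPreconnected S)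
    (hSU : S ⊆ U) {z₀ : ℂ} (hz₀ : z₀ ∈ S) (hfn : ∃ z ∈ U, ∃ w ∈ U, f z ≠ f w) :
    ∃ z ∈ S, deriv f z ≠ 0 := by
  by_contra! hderiv
  have hev : f =ᶠ[𝓝 z₀] fun _ => f z₀ := by
    filter_upwards [hS.mem_nhds hz₀] with z hz
    exact hS.is_const_of_deriv_eq_zero hSc (hf.mono hSU) hderiv hz hz₀
  have hfc := (hf.analyticOnNhd hU).eqOn_of_preconnected_of_eventuallyEq analyticOnNhd_const hUc
    (hSU hz₀) hev
  obtain ⟨z, hz, w, hw, hfzw⟩ := hfn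
  exact hfzw (by rw [hfc hz, hfc hw])

lemma exists_ne_of_tendstoLocallyUniformlyOn {U : Set ℂ} (hU : IsOpen U) {F : ℕ → ℂ → ℂ}
    {G : ℂ → ℂ} (hF : ∀ n, DifferentiableOn ℂ (F n) U)
    (hFG : TendstoLocallyUniformlyOn F G atTop U) {z₀ : ℂ} (hz₀ : z₀ ∈ U) {δ : ℝ} (hδ : 0 < δ)
    (hge : ∀ᶠ n in atTop, δ ≤ ‖deriv (F n) z₀‖) : ∃ z ∈ U, ∃ w ∈ U, G z ≠ G w := by
  have hlim : Tendsto (fun n => ‖deriv (F n) z₀‖) atTop (𝓝 ‖deriv G z₀‖) :=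
    ((hFG.deriv (Eventually.of_forall hF) hU).tendsto_at hz₀).norm
  have hδG : δ ≤ ‖deriv G z₀‖ := ge_of_tendsto hlim hge
  by_contra! hconst
  have hev : G =ᶠ[𝓝 z₀] fun _ => G z₀ := by
    filter_upwards [hU.mem_nhds hz₀] with z hz
    exact hconst z hz z₀ hz₀
  rw [hev.deriv_eq, deriv_const, norm_zero] at hδG
  linarith

end Limits

lemma mul_one_sub_sum_le {d x : ℕ → ℝ} (hx₀ : ∀ k, 0 ≤ x k) (hx₁ : ∀ k, x k ≤ 1) (hd : 0 ≤ d 0)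
    (hstep : ∀ k, (1 - x k) * d k ≤ d (k + 1)) (n : ℕ) :
    d 0 * (1 - ∑ k ∈ Finset.range n, x k) ≤ d n := by
  induction n with
  | zero => simp
  | succ n ih =>
    have hS : 0 ≤ ∑ k ∈ Finset.range n, x k := Finset.sum_nonneg fun k _ => hx₀ k
    rw [Finset.sum_range_succ]
    calc d 0 * (1 - (∑ k ∈ Finset.range n, x k + x n))
        ≤ (1 - x n) * (d 0 * (1 - ∑ k ∈ Finset.range n, x k)) := by
          nlinarith [mul_nonneg (mul_nonneg hd (hx₀ n)) hS]
      _ ≤ (1 - x n) * d n := mul_le_mul_of_nonneg_left ih (by linarith [hx₁ n])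
      _ ≤ d (n + 1) := hstep n

section LeftComposition

variable {f : ℕ → ℂ → ℂ}

lemma mapsTo_leftComp {s : Set ℂ} (hm : ∀ n, MapsTo (f n) s s) (n : ℕ) :
    MapsTo (leftComp f n) s s := by
  induction n with
  | zero => exact mapsTo_id s
  | succ n ih => exact (hm n).comp ih

lemma differentiableOn_leftComp {s : Set ℂ} (hd : ∀ n, DifferentiableOn ℂ (f n) s)
    (hm : ∀ n, MapsTo (f n) s s) (n : ℕ) : DifferentiableOn ℂ (leftComp f n) s := by
  induction n with
  | zero => exact differentiableOn_id
  | succ n ih => exact (hd n).comp ih (mapsTo_leftComp hm n)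

lemma deriv_leftComp_succ {s : Set ℂ} (hs : IsOpen s) (hd : ∀ n, DifferentiableOn ℂ (f n) s)
    (hm : ∀ n, MapsTo (f n) s s) {n : ℕ} {z : ℂ} (hz : z ∈ s) :
    deriv (leftComp f (n + 1)) z = deriv (f n) (leftComp f n z) * deriv (leftComp f n) z :=
  deriv_comp z ((hd n).differentiableAt (hs.mem_nhds (mapsTo_leftComp hm n hz)))
    ((differentiableOn_leftComp hd hm n).differentiableAt (hs.mem_nhds hz))

lemma exists_ne_leftComp (hd : ∀ n, DifferentiableOn ℂ (f n) unitDisc)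
    (hm : ∀ n, MapsTo (f n) unitDisc unitDisc)
    (hnc : ∀ n, ∃ z ∈ unitDisc, ∃ w ∈ unitDisc, f n z ≠ f n w) (n : ℕ) :
    ∃ z ∈ unitDisc, ∃ w ∈ unitDisc, leftComp f n z ≠ leftComp f n w := by
  induction n with
  | zero => exact ⟨0, zero_mem_unitDisc, 1 / 2, by norm_num [unitDisc], by norm_num [leftComp]⟩
  | succ n ih =>
    have := exists_ne_comp_of_isPreconnected isOpen_unitDisc isPreconnected_unitDisc
      isPreconnected_unitDisc ((hd n).analyticOnNhd isOpen_unitDisc)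
      ((differentiableOn_leftComp hd hm n).analyticOnNhd isOpen_unitDisc) (mapsTo_leftComp hm n)
      (hnc n) ih
    exact this

lemma hdist_leftComp_le_sum (hd : ∀ n, DifferentiableOn ℂ (f n) unitDisc)
    (hm : ∀ n, MapsTo (f n) unitDisc unitDisc) {a : ℂ} (ha : a ∈ unitDisc) (n : ℕ) :
    hdist (leftComp f n a) a ≤ ∑ k ∈ Finset.range n, hdist (f k a) a := by
  induction n with
  | zero => simp [leftComp, hdist_self]
  | succ n ih =>
    have hFa := mapsTo_leftComp hm n ha
    calc hdist (f n (leftComp f n a)) a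
        ≤ hdist (f n (leftComp f n a)) (f n a) + hdist (f n a) a :=
          hdist_triangle (hm n hFa) (hm n ha) ha
      _ ≤ hdist (leftComp f n a) a + hdist (f n a) a := by
          gcongr; exact hdist_le_hdist_of_mapsTo (hd n) (hm n) hFa ha
      _ ≤ _ := by rw [Finset.sum_range_succ]; gcongr

lemma exists_norm_leftComp_le (hd : ∀ n, DifferentiableOn ℂ (f n) unitDisc)
    (hm : ∀ n, MapsTo (f n) unitDisc unitDisc) {a : ℂ} (ha : a ∈ unitDisc)
    (hsa : Summable fun n => hdist (f n a) a) {r : ℝ} (hr : r < 1) :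
    ∃ R < 1, ∀ n z, ‖z‖ ≤ r → ‖leftComp f n z‖ ≤ R := by
  set S := ∑' n, hdist (f n a) a
  refine ⟨Real.tanh ((2 * artanh r + 2 * hdist a 0 + S) / 2), Real.tanh_lt_one _,
    fun n z hz => ?_⟩
  have hz₁ : z ∈ unitDisc := hz.trans_lt hr
  have h0 : (0 : ℂ) ∈ unitDisc := zero_mem_unitDisc
  have hF := mapsTo_leftComp hm n
  have horbit : hdist (leftComp f n a) a ≤ S :=
    (hdist_leftComp_le_sum hd hm ha n).trans
      (hsa.sum_le_tsum _ fun k _ => hdist_nonneg (hm k ha) ha)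
  refine norm_le_tanh_of_hdist_zero_le (hF hz₁) ?_
  calc hdist (leftComp f n z) 0
      ≤ hdist (leftComp f n z) (leftComp f n a) + (hdist (leftComp f n a) a + hdist a 0) :=
        (hdist_triangle (hF hz₁) (hF ha) h0).trans
          (add_le_add le_rfl (hdist_triangle (hF ha) ha h0))
    _ ≤ (hdist z 0 + hdist 0 a) + (S + hdist a 0) := by
        gcongr
        exact (hdist_le_hdist_of_mapsTo (differentiableOn_leftComp hd hm n) hF hz₁ ha).trans
          (hdist_triangle hz₁ h0 ha)
    _ ≤ 2 * artanh r + 2 * hdist a 0 + S := by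
        rw [hdist_comm 0 a]
        linarith [hdist_zero_right_le hz hr]

lemma exists_norm_leftComp_succ_sub_le (hd : ∀ n, DifferentiableOn ℂ (f n) unitDisc)
    (hm : ∀ n, MapsTo (f n) unitDisc unitDisc) {a b : ℂ} (ha : a ∈ unitDisc) (hb : b ∈ unitDisc)
    (hab : a ≠ b) (hsa : Summable fun n => hdist (f n a) a) {r : ℝ} (hr : r < 1) :
    ∃ C, ∀ n z, ‖z‖ ≤ r →
      ‖leftComp f (n + 1) z - leftComp f n z‖ ≤ C * (pdist (f n a) a + pdist (f n b) b) := by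
  obtain ⟨R, hR, hFR⟩ := exists_norm_leftComp_le hd hm ha hsa hr
  obtain ⟨C, -, hC⟩ := exists_norm_map_sub_self_le ha hb hab hR
  exact ⟨C, fun n z hz => hC (f n) (hd n) (hm n) _ (hFR n z hz)⟩

lemma exists_one_sub_le_norm_deriv_leftComp (hd : ∀ n, DifferentiableOn ℂ (f n) unitDisc)
    (hm : ∀ n, MapsTo (f n) unitDisc unitDisc) {a b : ℂ} (ha : a ∈ unitDisc) (hb : b ∈ unitDisc)
    (hab : a ≠ b) (hsa : Summable fun n => hdist (f n a) a) {r : ℝ} (hr : r < 1) :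
    ∃ C, 0 ≤ C ∧ ∀ n z, ‖z‖ ≤ r →
      1 - C * (pdist (f n a) a + pdist (f n b) b) ≤ ‖deriv (f n) (leftComp f n z)‖ := by
  obtain ⟨R, hR, hFR⟩ := exists_norm_leftComp_le hd hm ha hsa hr
  obtain ⟨C, hC, hCd⟩ := exists_norm_deriv_sub_one_le ha hb hab hR
  refine ⟨C, hC, fun n z hz => ?_⟩
  have h := hCd (f n) (hd n) (hm n) _ (hFR n z hz)
  rw [norm_sub_rev] at h
  linarith [norm_sub_norm_le (1 : ℂ) (deriv (f n) (leftComp f n z)), norm_one (α := ℂ)]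

lemma exists_norm_deriv_leftComp_ge (hd : ∀ n, DifferentiableOn ℂ (f n) unitDisc)
    (hm : ∀ n, MapsTo (f n) unitDisc unitDisc)
    (hnc : ∀ n, ∃ z ∈ unitDisc, ∃ w ∈ unitDisc, f n z ≠ f n w) {a b : ℂ} (ha : a ∈ unitDisc)
    (hb : b ∈ unitDisc) (hab : a ≠ b) (hsa : Summable fun n => hdist (f n a) a)
    (hε : Summable fun n => pdist (f n a) a + pdist (f n b) b) :
    ∃ z₀ ∈ unitDisc, ∃ δ > 0, ∀ᶠ n in atTop, δ ≤ ‖deriv (leftComp f n) z₀‖ := by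
  set ε := fun n => pdist (f n a) a + pdist (f n b) b
  obtain ⟨C, hC, hCd⟩ := exists_one_sub_le_norm_deriv_leftComp hd hm ha hb hab hsa
    (r := 1 / 2) (by norm_num)
  have hx₀ : ∀ k, 0 ≤ C * ε k := fun k =>
    mul_nonneg hC (add_nonneg (pdist_nonneg _ _) (pdist_nonneg _ _))
  obtain ⟨N, hN⟩ : ∃ N, ∑' k, C * ε (k + N) ≤ 1 / 2 :=
    ((tendsto_sum_nat_add fun k => C * ε k).eventually_le_const (by norm_num)).exists
  have hshift : Summable fun k => C * ε (k + N) := (summable_nat_add_iff N).2 (hε.mul_left C)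
  have hball : ball (0 : ℂ) (1 / 2) ⊆ unitDisc := fun z hz => by
    have := mem_ball_zero_iff.1 hz
    show ‖z‖ < 1
    linarith
  obtain ⟨z₀, hz₀, hz₀N⟩ := exists_deriv_ne_zero_of_exists_ne isOpen_unitDisc
    isPreconnected_unitDisc (differentiableOn_leftComp hd hm N) isOpen_ball
    (convex_ball _ _).isPreconnected hball (mem_ball_self (by norm_num))
    (exists_ne_leftComp hd hm hnc N)
  set d := fun m => ‖deriv (leftComp f (m + N)) z₀‖
  have hstep : ∀ m, (1 - C * ε (m + N)) * d m ≤ d (m + 1) := fun m => by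
    have hlow := hCd (m + N) z₀ (mem_ball_zero_iff.1 hz₀).le
    simp only [d, Nat.add_right_comm m 1 N]
    rw [deriv_leftComp_succ isOpen_unitDisc hd hm (hball hz₀), norm_mul]
    exact mul_le_mul_of_nonneg_right hlow (norm_nonneg _)
  have hbound := mul_one_sub_sum_le (d := d) (x := fun k => C * ε (k + N)) (fun k => hx₀ _)
    (fun k => ((hshift.le_tsum k fun j _ => hx₀ _).trans hN).trans (by norm_num))
    (norm_nonneg _) hstep
  refine ⟨z₀, hball hz₀, d 0 / 2, by simpa [d] using hz₀N, ?_⟩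
  filter_upwards [eventually_ge_atTop N] with n hn
  obtain ⟨m, rfl⟩ := Nat.exists_eq_add_of_le' hn
  have hsum : ∑ k ∈ Finset.range m, C * ε (k + N) ≤ 1 / 2 :=
    (hshift.sum_le_tsum _ fun k _ => hx₀ _).trans hN
  have h0 : 0 ≤ d 0 := norm_nonneg _
  calc d 0 / 2 ≤ d 0 * (1 - ∑ k ∈ Finset.range m, C * ε (k + N)) := by nlinarith
    _ ≤ d m := hbound m

end LeftComposition

/-- **Stability at the identity function, left compositions.** -/
theorem stability_identity_left
    (fseq : ℕ → ℂ → ℂ)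
    (hholo : ∀ n, DifferentiableOn ℂ (fseq n) unitDisc)
    (hself : ∀ n, MapsTo (fseq n) unitDisc unitDisc)
    (hnonconst : ∀ n, ∃ z ∈ unitDisc, ∃ w ∈ unitDisc, fseq n z ≠ fseq n w)
    (a b : ℂ) (ha : a ∈ unitDisc) (hb : b ∈ unitDisc) (hab : a ≠ b)
    (hsa : Summable fun n => hdist (fseq n a) a)
    (hsb : Summable fun n => hdist (fseq n b) b) :
    ∃ F : ℂ → ℂ, DifferentiableOn ℂ F unitDisc ∧ MapsTo F unitDisc unitDisc ∧
      (∃ z ∈ unitDisc, ∃ w ∈ unitDisc, F z ≠ F w) ∧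
      TendstoLocallyUniformlyOn (leftComp fseq) F atTop unitDisc := by
  have hε : Summable fun n => pdist (fseq n a) a + pdist (fseq n b) b :=
    (hsa.add hsb).of_nonneg_of_le (fun n => add_nonneg (pdist_nonneg _ _) (pdist_nonneg _ _))
      fun n => add_le_add (pdist_le_hdist (hself n ha) ha) (pdist_le_hdist (hself n hb) hb)
  have hFd := differentiableOn_leftComp hholo hself
  have hlim := tendstoLocallyUniformlyOn_ball_of_norm_sub_le hε fun r hr =>
    exists_norm_leftComp_succ_sub_le hholo hself ha hb hab hsa hr
  rw [← unitDisc_eq_ball] at hlim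
  obtain ⟨z₀, hz₀, δ, hδ, hge⟩ :=
    exists_norm_deriv_leftComp_ge hholo hself hnonconst ha hb hab hsa hε
  refine ⟨_, hlim.differentiableOn (Eventually.of_forall hFd) isOpen_unitDisc, fun z hz => ?_,
    exists_ne_of_tendstoLocallyUniformlyOn isOpen_unitDisc hFd hlim hz₀ hδ hge, hlim⟩
  obtain ⟨R, hR, hFR⟩ := exists_norm_leftComp_le hholo hself ha hsa (r := ‖z‖) hz
  exact (le_of_tendsto' (hlim.tendsto_at hz).norm fun n => hFR n z le_rfl).trans_lt hR
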